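/- Let M ∈ R^{n×n} have rank r with reduced SVD M = UΣV^T and let Ω ⊆ [n]×[n] be given. If p ≥ 1/n^{10} and ‖P_T R_Ω P_T − P_T‖_op ≤ 1/2, then for every Z ∈ R^{n×n} with P_Ω(Z) = 0 one has ‖P_T(Z)‖_F ≤ √2 · n^5 · ‖P_{T⊥}(Z)‖_*. -/

import Mathlib

open MeasureTheory Matrix

noncomputable section

/-- Frobenius norm of a real matrix. -/
def frobNorm {m n : ℕ} (X : Matrix (Fin m) (Fin n) ℝ) : ℝ :=
  Real.sqrt (∑ i, ∑ j, (X i j) ^ 2)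

/-- Nuclear norm: sum of singular values (square roots of eigenvalues of XᵀX). -/
def nuclearNorm {m n : ℕ} (X : Matrix (Fin m) (Fin n) ℝ) : ℝ :=
  ∑ i, Real.sqrt ((show (Xᵀ * X).IsHermitian by
    simpa only [Matrix.conjTranspose_eq_transpose_of_trivial] using
      Matrix.isHermitian_conjTranspose_mul_self X).eigenvalues i)

/-- Spectral norm: operator norm of the associated Euclidean linear map. -/
def specNorm {m n : ℕ} (X : Matrix (Fin m) (Fin n) ℝ) : ℝ :=
  ‖(Matrix.toEuclideanLin X).toContinuousLinearMap‖

/-- Entrywise ℓ∞ norm. -/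
def linf {m n : ℕ} (X : Matrix (Fin m) (Fin n) ℝ) : ℝ := ⨆ i, ⨆ j, |X i j|

/-- ℓ∞,2 norm: maximum of the largest row and column ℓ₂ norms. -/
def linf2 {n : ℕ} (X : Matrix (Fin n) (Fin n) ℝ) : ℝ :=
  max (⨆ i, Real.sqrt (∑ j, (X i j) ^ 2)) (⨆ j, Real.sqrt (∑ i, (X i j) ^ 2))

/-- Operator norm (w.r.t. the Frobenius norm) of a map on n×n matrices. -/
def opNormMap {n : ℕ} (A : Matrix (Fin n) (Fin n) ℝ → Matrix (Fin n) (Fin n) ℝ) : ℝ :=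
  ⨆ Z : {Z : Matrix (Fin n) (Fin n) ℝ // frobNorm Z ≤ 1}, frobNorm (A Z.1)

/-- P_Ω for a Boolean sample ω. -/
def projB {n : ℕ} (ω : Fin n × Fin n → Bool) (Z : Matrix (Fin n) (Fin n) ℝ) :
    Matrix (Fin n) (Fin n) ℝ := fun i j => if ω (i, j) then Z i j else 0

open Classical in
/-- P_Ω for a set Ω of indices. -/
def projS {n : ℕ} (Ω : Set (Fin n × Fin n)) (Z : Matrix (Fin n) (Fin n) ℝ) :
    Matrix (Fin n) (Fin n) ℝ := fun i j => if (i, j) ∈ Ω then Z i j else 0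

/-- The tangent-space projection P_T determined by U and V. -/
def projT {n r : ℕ} (U V : Matrix (Fin n) (Fin r) ℝ) (Z : Matrix (Fin n) (Fin n) ℝ) :
    Matrix (Fin n) (Fin n) ℝ :=
  U * Uᵀ * Z + Z * V * Vᵀ - U * Uᵀ * Z * V * Vᵀ

/-- Bernoulli(p) measure on Bool. -/
def bern (p : ℝ) : Measure Bool :=
  ENNReal.ofReal p • Measure.dirac true + ENNReal.ofReal (1 - p) • Measure.dirac false

/-- Product Bernoulli(p) measure on index samples: each (i,j) observed independently
with probability p. -/
def sampleMeasure (n : ℕ) (p : ℝ) : Measure (Fin n × Fin n → Bool) :=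
  Measure.pi fun _ => bern p

/-- ℓ₂ norm of the i-th row of U, i.e. ‖Uᵀ e_i‖₂. -/
def rowNorm {n r : ℕ} (U : Matrix (Fin n) (Fin r) ℝ) (i : Fin n) : ℝ :=
  Real.sqrt (∑ k, (U i k) ^ 2)

/-!
Write `W = P_T Z` and `A = P_T R_Ω P_T − P_T`. Since `P_T` is an orthogonal projection and
`W ∈ T`, `⟨W, A W⟩ = p⁻¹ ‖P_Ω W‖_F² − ‖W‖_F²`, while Cauchy–Schwarz and `‖A‖_op ≤ 1/2` give
`⟨W, A W⟩ ≥ −‖W‖_F²/2`; hence `‖W‖_F² ≤ 2 p⁻¹ ‖P_Ω W‖_F²`. As `P_Ω Z = 0`, `P_Ω W = −P_Ω (P_{T⊥} Z)`,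
so `‖P_Ω W‖_F ≤ ‖P_{T⊥} Z‖_F ≤ ‖P_{T⊥} Z‖_*`, and `p⁻¹ ≤ n¹⁰`.
-/

section Frobenius

variable {m k l : ℕ}

lemma frobNorm_nonneg (X : Matrix (Fin m) (Fin k) ℝ) : 0 ≤ frobNorm X :=
  Real.sqrt_nonneg _

lemma frobNorm_neg (X : Matrix (Fin m) (Fin k) ℝ) : frobNorm (-X) = frobNorm X := by
  simp only [frobNorm, Matrix.neg_apply, neg_sq]

lemma frobNorm_eq_trace (X : Matrix (Fin m) (Fin k) ℝ) :
    frobNorm X = Real.sqrt (trace (Xᵀ * X)) := by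
  simp only [frobNorm, trace, diag_apply, mul_apply, transpose_apply, sq]
  rw [Finset.sum_comm]

lemma frobNorm_le_nuclearNorm (X : Matrix (Fin m) (Fin k) ℝ) : frobNorm X ≤ nuclearNorm X := by
  have hA : (Xᵀ * X).IsHermitian := by
    simpa only [conjTranspose_eq_transpose_of_trivial] using isHermitian_conjTranspose_mul_self X
  have hPSD : (Xᵀ * X).PosSemidef := by
    simpa only [conjTranspose_eq_transpose_of_trivial] using posSemidef_conjTranspose_mul_self X
  have htrace : trace (Xᵀ * X) = ∑ i, hA.eigenvalues i := by
    simpa using hA.trace_eq_sum_eigenvalues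
  rw [frobNorm_eq_trace, htrace, nuclearNorm, Real.sqrt_le_left (by positivity)]
  calc ∑ i, hA.eigenvalues i = ∑ i, Real.sqrt (hA.eigenvalues i) ^ 2 :=
        Finset.sum_congr rfl fun i _ => (Real.sq_sqrt (hPSD.eigenvalues_nonneg i)).symm
    _ ≤ (∑ i, Real.sqrt (hA.eigenvalues i)) ^ 2 :=
        Finset.sum_sq_le_sq_sum_of_nonneg fun i _ => Real.sqrt_nonneg _

def frobInner (X Y : Matrix (Fin m) (Fin k) ℝ) : ℝ := ∑ i, ∑ j, X i j * Y i j

lemma frobInner_eq_trace (X Y : Matrix (Fin m) (Fin k) ℝ) : frobInner X Y = trace (Xᵀ * Y) := by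
  simp only [frobInner, trace, diag_apply, mul_apply, transpose_apply]
  exact Finset.sum_comm

lemma frobInner_self (X : Matrix (Fin m) (Fin k) ℝ) : frobInner X X = frobNorm X ^ 2 := by
  rw [frobNorm, Real.sq_sqrt (by positivity)]
  simp only [frobInner, sq]

lemma neg_frobNorm_mul_le_frobInner (X Y : Matrix (Fin m) (Fin k) ℝ) :
    -(frobNorm X * frobNorm Y) ≤ frobInner X Y := by
  have h := Real.sum_mul_le_sqrt_mul_sqrt Finset.univ (fun ij : Fin m × Fin k => -X ij.1 ij.2)
    (fun ij => Y ij.1 ij.2)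
  simp only [neg_mul, Finset.sum_neg_distrib, neg_sq, Fintype.sum_prod_type] at h
  simpa only [frobInner, frobNorm, neg_le] using h

lemma frobInner_add_left (X Y Z : Matrix (Fin m) (Fin k) ℝ) :
    frobInner (X + Y) Z = frobInner X Z + frobInner Y Z := by
  simp only [frobInner, Matrix.add_apply, add_mul, Finset.sum_add_distrib]

lemma frobInner_sub_left (X Y Z : Matrix (Fin m) (Fin k) ℝ) :
    frobInner (X - Y) Z = frobInner X Z - frobInner Y Z := by
  simp only [frobInner, Matrix.sub_apply, sub_mul, Finset.sum_sub_distrib]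

lemma frobInner_add_right (X Y Z : Matrix (Fin m) (Fin k) ℝ) :
    frobInner X (Y + Z) = frobInner X Y + frobInner X Z := by
  simp only [frobInner, Matrix.add_apply, mul_add, Finset.sum_add_distrib]

lemma frobInner_sub_right (X Y Z : Matrix (Fin m) (Fin k) ℝ) :
    frobInner X (Y - Z) = frobInner X Y - frobInner X Z := by
  simp only [frobInner, Matrix.sub_apply, mul_sub, Finset.sum_sub_distrib]

lemma frobInner_smul_right (c : ℝ) (X Y : Matrix (Fin m) (Fin k) ℝ) :
    frobInner X (c • Y) = c * frobInner X Y := by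
  simp only [frobInner, Matrix.smul_apply, smul_eq_mul, Finset.mul_sum]
  exact Finset.sum_congr rfl fun i _ => Finset.sum_congr rfl fun j _ => by ring

lemma frobInner_mul_left (A : Matrix (Fin l) (Fin m) ℝ) (X : Matrix (Fin m) (Fin k) ℝ)
    (Y : Matrix (Fin l) (Fin k) ℝ) : frobInner (A * X) Y = frobInner X (Aᵀ * Y) := by
  rw [frobInner_eq_trace, frobInner_eq_trace, transpose_mul, Matrix.mul_assoc]

lemma frobInner_mul_right (X : Matrix (Fin m) (Fin k) ℝ) (B : Matrix (Fin k) (Fin l) ℝ)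
    (Y : Matrix (Fin m) (Fin l) ℝ) : frobInner (X * B) Y = frobInner X (Y * Bᵀ) := by
  rw [frobInner_eq_trace, frobInner_eq_trace, transpose_mul, Matrix.mul_assoc, trace_mul_comm,
    Matrix.mul_assoc]

end Frobenius

section SampledEntries

variable {n : ℕ} (Ω : Set (Fin n × Fin n))

def projSLin : Matrix (Fin n) (Fin n) ℝ →ₗ[ℝ] Matrix (Fin n) (Fin n) ℝ where
  toFun := projS Ω
  map_add' X Y := by
    ext i j
    simp only [projS, Matrix.add_apply]
    split_ifs <;> simp
  map_smul' c X := by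
    ext i j
    simp only [projS, Matrix.smul_apply, smul_eq_mul, RingHom.id_apply]
    split_ifs <;> simp

lemma projS_sub (X Y : Matrix (Fin n) (Fin n) ℝ) :
    projS Ω (X - Y) = projS Ω X - projS Ω Y :=
  (projSLin Ω).map_sub X Y

lemma frobNorm_projS_le (X : Matrix (Fin n) (Fin n) ℝ) : frobNorm (projS Ω X) ≤ frobNorm X := by
  refine Real.sqrt_le_sqrt (Finset.sum_le_sum fun i _ => Finset.sum_le_sum fun j _ => ?_)
  simp only [projS]
  split_ifs <;> simp [sq_nonneg]

lemma frobInner_projS_right (X : Matrix (Fin n) (Fin n) ℝ) :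
    frobInner X (projS Ω X) = frobNorm (projS Ω X) ^ 2 := by
  rw [← frobInner_self]
  refine Finset.sum_congr rfl fun i _ => Finset.sum_congr rfl fun j _ => ?_
  simp only [projS]
  split_ifs <;> simp

end SampledEntries

section TangentSpace

variable {n r : ℕ} (U V : Matrix (Fin n) (Fin r) ℝ)

def projTLin : Matrix (Fin n) (Fin n) ℝ →ₗ[ℝ] Matrix (Fin n) (Fin n) ℝ where
  toFun := projT U V
  map_add' X Y := by
    simp only [projT, Matrix.mul_add, Matrix.add_mul]
    abel
  map_smul' c X := by
    simp only [projT, Matrix.mul_smul, Matrix.smul_mul, RingHom.id_apply, smul_add, smul_sub]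

lemma projT_projT (hU : Uᵀ * U = 1) (hV : Vᵀ * V = 1) (X : Matrix (Fin n) (Fin n) ℝ) :
    projT U V (projT U V X) = projT U V X := by
  have hUUU : U * Uᵀ * U = U := by rw [Matrix.mul_assoc, hU, Matrix.mul_one]
  have hVV : ∀ Y : Matrix (Fin n) (Fin r) ℝ, Y * Vᵀ * V = Y := fun Y => by
    rw [Matrix.mul_assoc, hV, Matrix.mul_one]
  simp only [projT, Matrix.add_mul, Matrix.sub_mul, Matrix.mul_add, Matrix.mul_sub,
    ← Matrix.mul_assoc, hUUU, hVV]
  abel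

lemma frobInner_projT_left (X Y : Matrix (Fin n) (Fin n) ℝ) :
    frobInner (projT U V X) Y = frobInner X (projT U V Y) := by
  have hU : ∀ Z W : Matrix (Fin n) (Fin n) ℝ, frobInner (U * Uᵀ * Z) W = frobInner Z (U * Uᵀ * W) :=
    fun Z W => by rw [frobInner_mul_left, transpose_mul, transpose_transpose]
  have hV : ∀ Z W : Matrix (Fin n) (Fin n) ℝ, frobInner (Z * V * Vᵀ) W = frobInner Z (W * V * Vᵀ) :=
    fun Z W => by
      rw [Matrix.mul_assoc, frobInner_mul_right, transpose_mul, transpose_transpose,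
        Matrix.mul_assoc]
  rw [projT, projT, frobInner_sub_left, frobInner_add_left, frobInner_sub_right,
    frobInner_add_right, hU, hV, hV, hU]
  simp only [Matrix.mul_assoc]

end TangentSpace

section OperatorNorm

attribute [local instance] Matrix.frobeniusNormedAddCommGroup Matrix.frobeniusNormedSpace

lemma frobNorm_eq_norm {m k : ℕ} (X : Matrix (Fin m) (Fin k) ℝ) : frobNorm X = ‖X‖ := by
  rw [frobNorm, frobenius_norm_def, Real.sqrt_eq_rpow]
  simp only [Real.norm_eq_abs, sq_abs, Real.rpow_two]

variable {n : ℕ}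

lemma frobNorm_apply_le_opNormMap (A : Matrix (Fin n) (Fin n) ℝ →ₗ[ℝ] Matrix (Fin n) (Fin n) ℝ)
    (X : Matrix (Fin n) (Fin n) ℝ) : frobNorm (A X) ≤ opNormMap A * frobNorm X := by
  have h := (LinearMap.toContinuousLinearMap A).le_opNorm X
  rw [← (LinearMap.toContinuousLinearMap A).sSup_unitClosedBall_eq_norm, sSup_image'] at h
  rw [frobNorm_eq_norm, frobNorm_eq_norm]
  refine h.trans_eq (congrArg (· * ‖X‖) ?_)
  exact (Equiv.subtypeEquivRight fun Z => by
    simp only [Metric.mem_closedBall, dist_zero_right, frobNorm_eq_norm]).iSup_congr fun _ =>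
      frobNorm_eq_norm _

end OperatorNorm

lemma one_sub_mul_frobNorm_sq_le {n r : ℕ} (U V : Matrix (Fin n) (Fin r) ℝ)
    (Ω : Set (Fin n × Fin n)) (c δ : ℝ)
    (hop : opNormMap (fun Z => projT U V (c • projS Ω (projT U V Z)) - projT U V Z) ≤ δ)
    {W : Matrix (Fin n) (Fin n) ℝ} (hW : projT U V W = W) :
    (1 - δ) * frobNorm W ^ 2 ≤ c * frobNorm (projS Ω W) ^ 2 := by
  let A := projTLin U V ∘ₗ (c • projSLin Ω) ∘ₗ projTLin U V - projTLin U V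
  have hAW : A W = projT U V (c • projS Ω W) - W := by
    change projT U V (c • projS Ω (projT U V W)) - projT U V W = _
    rw [hW]
  have hbound : frobNorm (A W) ≤ δ * frobNorm W :=
    (frobNorm_apply_le_opNormMap A W).trans (mul_le_mul_of_nonneg_right hop (frobNorm_nonneg W))
  have hinner : frobInner W (A W) = c * frobNorm (projS Ω W) ^ 2 - frobNorm W ^ 2 := by
    rw [hAW, frobInner_sub_right, frobInner_self, ← frobInner_projT_left, hW,
      frobInner_smul_right, frobInner_projS_right]
  nlinarith [neg_frobNorm_mul_le_frobInner W (A W),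
    mul_le_mul_of_nonneg_left hbound (frobNorm_nonneg W)]

theorem statement5_general (n r : ℕ)
    (U V : Matrix (Fin n) (Fin r) ℝ)
    (Ω : Set (Fin n × Fin n)) (p : ℝ)
    (hU : Uᵀ * U = 1) (hV : Vᵀ * V = 1)
    (hp : 1 / (n : ℝ) ^ 10 ≤ p)
    (hop : opNormMap
      (fun Z => projT U V (p⁻¹ • projS Ω (projT U V Z)) - projT U V Z) ≤ 1 / 2) :
    ∀ Z : Matrix (Fin n) (Fin n) ℝ, projS Ω Z = 0 →
      frobNorm (projT U V Z) ≤ Real.sqrt 2 * (n : ℝ) ^ 5 * nuclearNorm (Z - projT U V Z) := by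
  intro Z hZ
  rcases Nat.eq_zero_or_pos n with rfl | hn
  · simp [frobNorm]
  set W := projT U V Z
  have hpinv : p⁻¹ ≤ (n : ℝ) ^ 10 := by
    simpa only [one_div, inv_inv] using inv_anti₀ (by positivity) hp
  have hkey : (1 - 1 / 2) * frobNorm W ^ 2 ≤ p⁻¹ * frobNorm (projS Ω W) ^ 2 :=
    one_sub_mul_frobNorm_sq_le U V Ω p⁻¹ (1 / 2) hop (projT_projT U V hU hV Z)
  have hΩ : frobNorm (projS Ω W) ≤ nuclearNorm (Z - W) :=
    calc frobNorm (projS Ω W) = frobNorm (projS Ω (Z - W)) := by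
          rw [projS_sub, hZ, zero_sub, frobNorm_neg]
      _ ≤ frobNorm (Z - W) := frobNorm_projS_le Ω _
      _ ≤ nuclearNorm (Z - W) := frobNorm_le_nuclearNorm _
  have hN : 0 ≤ nuclearNorm (Z - W) := (frobNorm_nonneg _).trans hΩ
  refine (pow_le_pow_iff_left₀ (frobNorm_nonneg W) (by positivity) two_ne_zero).mp ?_
  calc frobNorm W ^ 2 ≤ 2 * (p⁻¹ * frobNorm (projS Ω W) ^ 2) := by linarith
    _ ≤ 2 * ((n : ℝ) ^ 10 * nuclearNorm (Z - W) ^ 2) := by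
        gcongr
        exact frobNorm_nonneg _
    _ = (Real.sqrt 2 * (n : ℝ) ^ 5 * nuclearNorm (Z - W)) ^ 2 := by
        rw [mul_pow, mul_pow, Real.sq_sqrt zero_le_two]
        ring

/-- Lemma: null-space bound.
If p ≥ 1/n^{10} and ‖P_T R_Ω P_T − P_T‖_op ≤ 1/2, then every Z with P_Ω(Z) = 0
satisfies ‖P_T(Z)‖_F ≤ √2 n⁵ ‖P_{T⊥}(Z)‖_*. -/
theorem statement5 (n r : ℕ) (M : Matrix (Fin n) (Fin n) ℝ)
    (U V : Matrix (Fin n) (Fin r) ℝ) (S : Matrix (Fin r) (Fin r) ℝ)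
    (Ω : Set (Fin n × Fin n)) (p : ℝ)
    -- reduced SVD of M with rank r
    (hU : Uᵀ * U = 1) (hV : Vᵀ * V = 1)
    (hSdiag : ∀ i j, i ≠ j → S i j = 0) (hSpos : ∀ i, 0 < S i i)
    (hM : M = U * S * Vᵀ)
    (hp : 1 / (n : ℝ) ^ 10 ≤ p)
    (hop : opNormMap
      (fun Z => projT U V (p⁻¹ • projS Ω (projT U V Z)) - projT U V Z) ≤ 1 / 2) :
    ∀ Z : Matrix (Fin n) (Fin n) ℝ, projS Ω Z = 0 →
      frobNorm (projT U V Z) ≤ Real.sqrt 2 * (n : ℝ) ^ 5 * nuclearNorm (Z - projT U V Z) :=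
  statement5_general n r U V Ω p hU hV hp hop
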